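/- arXiv:2110.11849 — 3 statements merged into one kernel-verified Lean document; each statement's English description precedes it below -/
import Mathlib

section
/- For every real number p with 1 < p ≤ 2 there exists a constant C > 0 such that for all vectors x, y in ℝ^N, one has 0 ≤ ⟨|x|^{p-2}x − |y|^{p-2}y, x − y⟩ ≤ C|x − y|^p, where |·| denotes the Euclidean norm and the expression |z|^{p-2}z is interpreted as 0 when z = 0. -/
open scoped RealInnerProductSpace

/-!
Write `a = ‖x‖`, `b = ‖y‖`, `d = ‖x - y‖`, `α = a ^ (p - 2)`, `β = b ^ (p - 2)`. Polarization gives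
`⟪α • x - β • y, x - y⟫ = ((α - β) (a² - b²) + (α + β) d²) / 2`.
Since `d ≥ |a - b|`, this is at least `(a ^ (p - 1) - b ^ (p - 1)) (a - b) ≥ 0`.
For the upper bound let `b ≤ a`. If `b ≤ d`, then `a ≤ 2d` and Cauchy–Schwarz bounds the pairing
by `2 a ^ (p - 1) d ≤ (2d) ^ p`. If `d < b`, the first term of the identity is `≤ 0` because
`p ≤ 2` makes `t ↦ t ^ (p - 2)` antitone, and the second is `≤ β d² ≤ d ^ (p - 2) d² = d ^ p`.
-/

lemma rpow_sub_two_mul_self {a : ℝ} (p : ℝ) (ha : 0 ≤ a) (hp : p ≠ 1) :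
    a ^ (p - 2) * a = a ^ (p - 1) := by
  rw [← Real.rpow_add_one' ha (by contrapose! hp; linarith)]
  congr 1
  ring

lemma rpow_sub_two_mul_sq_le_rpow {b d p : ℝ} (hd : 0 ≤ d) (hdb : d ≤ b) (hp : p ≤ 2) :
    b ^ (p - 2) * d ^ 2 ≤ d ^ p := by
  rcases hd.eq_or_lt with rfl | hd
  · simpa using Real.rpow_nonneg le_rfl p
  calc b ^ (p - 2) * d ^ 2 ≤ d ^ (p - 2) * d ^ 2 :=
        mul_le_mul_of_nonneg_right (Real.rpow_le_rpow_of_nonpos hd hdb (by linarith)) (sq_nonneg d)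
    _ = d ^ p := by rw [← Real.rpow_natCast, ← Real.rpow_add hd]; norm_num

section InnerProductSpace

variable {E : Type*} [NormedAddCommGroup E] [InnerProductSpace ℝ E]

lemma inner_smul_sub_smul_sub_eq (α β : ℝ) (x y : E) :
    ⟪α • x - β • y, x - y⟫ =
      ((α - β) * (‖x‖ ^ 2 - ‖y‖ ^ 2) + (α + β) * ‖x - y‖ ^ 2) / 2 := by
  simp only [norm_sub_sq_real, inner_sub_left, inner_sub_right, real_inner_smul_left,
    real_inner_self_eq_norm_sq, real_inner_comm y x]
  ring

lemma mul_sub_le_inner_smul_sub_smul_sub {α β : ℝ} (hα : 0 ≤ α) (hβ : 0 ≤ β) (x y : E) :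
    (α * ‖x‖ - β * ‖y‖) * (‖x‖ - ‖y‖) ≤ ⟪α • x - β • y, x - y⟫ := by
  have hd : (‖x‖ - ‖y‖) ^ 2 ≤ ‖x - y‖ ^ 2 := by
    obtain ⟨h₁, h₂⟩ := abs_le.1 (abs_norm_sub_norm_le x y)
    exact sq_le_sq' h₁ h₂
  rw [inner_smul_sub_smul_sub_eq]
  linarith [mul_le_mul_of_nonneg_left hd (add_nonneg hα hβ)]

theorem inner_rpow_smul_sub_nonneg {p : ℝ} (hp : 1 < p) (x y : E) :
    0 ≤ ⟪‖x‖ ^ (p - 2) • x - ‖y‖ ^ (p - 2) • y, x - y⟫ := by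
  refine le_trans ?_ (mul_sub_le_inner_smul_sub_smul_sub (by positivity) (by positivity) x y)
  rw [rpow_sub_two_mul_self p (norm_nonneg x) hp.ne', rpow_sub_two_mul_self p (norm_nonneg y) hp.ne']
  rcases le_total ‖x‖ ‖y‖ with h | h
  · exact mul_nonneg_of_nonpos_of_nonpos
      (sub_nonpos.2 (Real.rpow_le_rpow (norm_nonneg x) h (by linarith))) (sub_nonpos.2 h)
  · exact mul_nonneg
      (sub_nonneg.2 (Real.rpow_le_rpow (norm_nonneg y) h (by linarith))) (sub_nonneg.2 h)

lemma inner_rpow_smul_sub_le_of_norm_le {p : ℝ} (hp1 : 1 < p) (hp2 : p ≤ 2) {x y : E}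
    (hyx : ‖y‖ ≤ ‖x‖) :
    ⟪‖x‖ ^ (p - 2) • x - ‖y‖ ^ (p - 2) • y, x - y⟫ ≤ 2 ^ p * ‖x - y‖ ^ p := by
  rcases le_or_gt ‖y‖ ‖x - y‖ with hyd | hdy
  · have hx : ‖x‖ ≤ 2 * ‖x - y‖ := by linarith [norm_le_norm_add_norm_sub' x y]
    have hnorm : ‖‖x‖ ^ (p - 2) • x - ‖y‖ ^ (p - 2) • y‖ ≤ ‖x‖ ^ (p - 1) + ‖y‖ ^ (p - 1) := by
      refine (norm_sub_le _ _).trans_eq ?_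
      rw [norm_smul, norm_smul, Real.norm_of_nonneg (by positivity),
        Real.norm_of_nonneg (by positivity), rpow_sub_two_mul_self p (norm_nonneg x) hp1.ne',
        rpow_sub_two_mul_self p (norm_nonneg y) hp1.ne']
    calc _ ≤ ‖‖x‖ ^ (p - 2) • x - ‖y‖ ^ (p - 2) • y‖ * ‖x - y‖ := real_inner_le_norm _ _
      _ ≤ (‖x‖ ^ (p - 1) + ‖y‖ ^ (p - 1)) * ‖x - y‖ := by gcongr
      _ ≤ (2 * ‖x‖ ^ (p - 1)) * ‖x - y‖ := by
          gcongr
          linarith [Real.rpow_le_rpow (norm_nonneg y) hyx (by linarith : 0 ≤ p - 1)]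
      _ ≤ (2 * ‖x - y‖) ^ (p - 1) * (2 * ‖x - y‖) := by
          rw [mul_comm 2, mul_assoc]
          gcongr
      _ = 2 ^ p * ‖x - y‖ ^ p := by
          rw [← Real.rpow_add_one' (by positivity) (by linarith), sub_add_cancel,
            Real.mul_rpow zero_le_two (norm_nonneg _)]
  · have hy : 0 < ‖y‖ := (norm_nonneg _).trans_lt hdy
    have hαβ : ‖x‖ ^ (p - 2) ≤ ‖y‖ ^ (p - 2) := Real.rpow_le_rpow_of_nonpos hy hyx (by linarith)
    have hsq : ‖y‖ ^ 2 ≤ ‖x‖ ^ 2 := by gcongr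
    rw [inner_smul_sub_smul_sub_eq]
    calc _ ≤ ‖y‖ ^ (p - 2) * ‖x - y‖ ^ 2 := by
          linarith [mul_nonpos_of_nonpos_of_nonneg (sub_nonpos.2 hαβ) (sub_nonneg.2 hsq),
            mul_nonpos_of_nonpos_of_nonneg (sub_nonpos.2 hαβ) (sq_nonneg ‖x - y‖)]
      _ ≤ ‖x - y‖ ^ p := rpow_sub_two_mul_sq_le_rpow (norm_nonneg _) hdy.le hp2
      _ ≤ 2 ^ p * ‖x - y‖ ^ p :=
          le_mul_of_one_le_left (by positivity) (Real.one_le_rpow one_le_two (by linarith))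

theorem inner_rpow_smul_sub_le {p : ℝ} (hp1 : 1 < p) (hp2 : p ≤ 2) (x y : E) :
    ⟪‖x‖ ^ (p - 2) • x - ‖y‖ ^ (p - 2) • y, x - y⟫ ≤ 2 ^ p * ‖x - y‖ ^ p := by
  rcases le_total ‖y‖ ‖x‖ with h | h
  · exact inner_rpow_smul_sub_le_of_norm_le hp1 hp2 h
  · rw [← inner_neg_neg, neg_sub, neg_sub, norm_sub_rev]
    exact inner_rpow_smul_sub_le_of_norm_le hp1 hp2 h

end InnerProductSpace

theorem stmt_0_general (p : ℝ) (hp1 : 1 < p) (hp2 : p ≤ 2) (N : ℕ) :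
    ∃ C : ℝ, 0 < C ∧ ∀ x y : EuclideanSpace ℝ (Fin N),
      0 ≤ ⟪(‖x‖ ^ (p - 2)) • x - (‖y‖ ^ (p - 2)) • y, x - y⟫ ∧
      ⟪(‖x‖ ^ (p - 2)) • x - (‖y‖ ^ (p - 2)) • y, x - y⟫ ≤ C * ‖x - y‖ ^ p :=
  ⟨2 ^ p, by positivity,
    fun x y => ⟨inner_rpow_smul_sub_nonneg hp1 x y, inner_rpow_smul_sub_le hp1 hp2 x y⟩⟩

/-- For `1 < p ≤ 2` there is `C > 0` such that for all `x, y ∈ ℝ^N`,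
`0 ≤ ⟨|x|^{p-2}x − |y|^{p-2}y, x − y⟩ ≤ C |x − y|^p`, where `|z|^{p-2}z := 0` at `z = 0`
(this convention is automatic here since `0 ^ (p-2) = 0` for real rpow and `c • 0 = 0`). -/
theorem stmt_0 (p : ℝ) (hp1 : 1 < p) (hp2 : p ≤ 2) (N : ℕ) (hN : 1 ≤ N) :
    ∃ C : ℝ, 0 < C ∧ ∀ x y : EuclideanSpace ℝ (Fin N),
      0 ≤ ⟪(‖x‖ ^ (p - 2)) • x - (‖y‖ ^ (p - 2)) • y, x - y⟫ ∧
      ⟪(‖x‖ ^ (p - 2)) • x - (‖y‖ ^ (p - 2)) • y, x - y⟫ ≤ C * ‖x - y‖ ^ p :=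
  stmt_0_general p hp1 hp2 N
end

section
/- Suppose ∫_Ω a φ_p^q dx > 0. Then M(λ*) = −∞; that is, the infimum of I_{λ*} over the Nehari manifold N_{λ*} equals −∞. More precisely, taking w_ε = φ_p + ε θ with θ ∈ W₀^{1,p} \ ℝφ_p, one has E_{λ*}(w_ε) > 0 for small ε ≠ 0, ∫_Ω a|w_ε|^q dx → ∫_Ω a φ_p^q dx > 0, E_{λ*}(w_ε) → 0 as ε → 0, and consequently J_{λ*}(w_ε) = −((p−q)/(pq)) (∫_Ω a|w_ε|^q dx)^{p/(p−q)} / E_{λ*}(w_ε)^{q/(p−q)} → −∞. -/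
/-!
Along `w_ε = φ_p + εθ` the energy `E_{λ*}(w_ε)` is positive for `ε ≠ 0` (otherwise simplicity of
`λ₁(p)` would put `θ` in `ℝφ_p`) and tends to `E_{λ*}(φ_p) = 0`, while `∫ a|w_ε|^q` stays near
`∫ a φ_p^q > 0`. Since `E` is `p`-homogeneous and `∫ a|·|^q` is `q`-homogeneous, the fibering map
`t ↦ I(t w_ε)` has its critical point on the Nehari manifold at `t^{p-q} = A(w_ε)/E(w_ε)`, with
value `J(w_ε) = -((p-q)/(pq)) A(w_ε)^{p/(p-q)} / E(w_ε)^{q/(p-q)}`, which tends to `-∞`.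
-/

open MeasureTheory Filter Topology

section Homogeneity

variable {V : Type*} [MeasurableSpace V]

theorem abs_mul_rpow (t y p : ℝ) : |t * y| ^ p = |t| ^ p * |y| ^ p := by
  rw [abs_mul, Real.mul_rpow (abs_nonneg _) (abs_nonneg _)]

noncomputable def weightedLpIntegral (μ : Measure V) (a : V → ℝ) (q : ℝ) (u : V → ℝ) : ℝ :=
  ∫ x, a x * |u x| ^ q ∂μ

theorem weightedLpIntegral_const_mul (μ : Measure V) (a : V → ℝ) (q t : ℝ) (u : V → ℝ) :
    weightedLpIntegral μ a q (fun x => t * u x) = |t| ^ q * weightedLpIntegral μ a q u := by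
  simp only [weightedLpIntegral, abs_mul_rpow, mul_left_comm (a _), integral_const_mul]

variable [NormedAddCommGroup V] [NormedSpace ℝ V]

noncomputable def pEnergy (μ : Measure V) (lam p : ℝ) (u : V → ℝ) : ℝ :=
  (∫ x, ‖fderiv ℝ u x‖ ^ p ∂μ) - lam * ∫ x, |u x| ^ p ∂μ

theorem pEnergy_const_mul (μ : Measure V) (lam p t : ℝ) (u : V → ℝ) :
    pEnergy μ lam p (fun x => t * u x) = |t| ^ p * pEnergy μ lam p u := by
  have hgrad : ∀ x, ‖fderiv ℝ (fun y => t * u y) x‖ ^ p = |t| ^ p * ‖fderiv ℝ u x‖ ^ p := by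
    intro x
    rw [show (fun y => t * u y) = t • u from rfl, fderiv_const_smul_field, Pi.smul_apply,
      norm_smul, Real.norm_eq_abs, Real.mul_rpow (abs_nonneg _) (norm_nonneg _)]
  simp only [pEnergy, hgrad, abs_mul_rpow, integral_const_mul]
  ring

end Homogeneity

section Fibering

variable {p q e a : ℝ}

/-- The critical point of `t ↦ t^p e / p - t^q a / q` on `(0, ∞)`. -/
noncomputable def nehariScale (p q e a : ℝ) : ℝ := (a / e) ^ (p - q)⁻¹

theorem rpow_div_sub_mul_self (hpq : q < p) {x : ℝ} (hx : 0 < x) :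
    x ^ (q / (p - q)) * x = x ^ (p / (p - q)) := by
  have hd : p - q ≠ 0 := (sub_pos.2 hpq).ne'
  rw [← Real.rpow_add_one hx.ne']
  congr 1
  field_simp
  ring

theorem nehariScale_pos (he : 0 < e) (ha : 0 < a) : 0 < nehariScale p q e a :=
  Real.rpow_pos_of_pos (div_pos ha he) _

theorem nehariScale_rpow (he : 0 < e) (ha : 0 < a) (r : ℝ) :
    nehariScale p q e a ^ r = a ^ (r / (p - q)) / e ^ (r / (p - q)) := by
  rw [nehariScale, ← Real.rpow_mul (div_pos ha he).le, Real.div_rpow ha.le he.le, inv_mul_eq_div]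

theorem nehariScale_rpow_mul_left (hpq : q < p) (he : 0 < e) (ha : 0 < a) :
    nehariScale p q e a ^ p * e = a ^ (p / (p - q)) / e ^ (q / (p - q)) := by
  rw [nehariScale_rpow he ha, ← rpow_div_sub_mul_self hpq he]
  have := Real.rpow_pos_of_pos he (q / (p - q))
  field_simp

theorem nehariScale_rpow_mul_right (hpq : q < p) (he : 0 < e) (ha : 0 < a) :
    nehariScale p q e a ^ q * a = a ^ (p / (p - q)) / e ^ (q / (p - q)) := by
  rw [nehariScale_rpow he ha, ← rpow_div_sub_mul_self hpq ha]
  ring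

theorem tendsto_neg_mul_rpow_div_rpow_atBot {α : Type*} {l : Filter α} {f g : α → ℝ}
    {c r s : ℝ} (hc : 0 < c) (ha : 0 < a) (hs : 0 < s) (hf : Tendsto f l (𝓝 a))
    (hg : Tendsto g l (𝓝 0)) (hg_pos : ∀ᶠ x in l, 0 < g x) :
    Tendsto (fun x => -c * f x ^ r / g x ^ s) l atBot := by
  have hnum : Tendsto (fun x => -c * f x ^ r) l (𝓝 (-c * a ^ r)) :=
    ((Real.continuousAt_rpow_const _ r (Or.inl ha.ne')).tendsto.comp hf).const_mul _
  have hden : Tendsto (fun x => (g x ^ s)⁻¹) l atTop := by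
    refine tendsto_inv_nhdsGT_zero.comp (tendsto_nhdsWithin_iff.2 ⟨?_, ?_⟩)
    · simpa [Real.zero_rpow hs.ne', Function.comp_def] using
        (Real.continuousAt_rpow_const 0 s (Or.inr hs.le)).tendsto.comp hg
    · exact hg_pos.mono fun x hx => Real.rpow_pos_of_pos hx s
  have hlim_neg : -c * a ^ r < 0 :=
    mul_neg_of_neg_of_pos (neg_neg_of_pos hc) (Real.rpow_pos_of_pos ha r)
  simpa only [div_eq_mul_inv] using hnum.neg_mul_atTop hlim_neg hden

end Fibering

section Nehari

variable {X : Type*} {W : Set (X → ℝ)} {E A : (X → ℝ) → ℝ} {φ θ w : X → ℝ} {p q : ℝ}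

theorem exists_nehari_rescaling (hq : 0 < q) (hpq : q < p)
    (hE : ∀ t : ℝ, 0 < t → E (fun x => t * w x) = t ^ p * E w)
    (hA : ∀ t : ℝ, 0 < t → A (fun x => t * w x) = t ^ q * A w)
    (he : 0 < E w) (ha : 0 < A w) :
    ∃ t : ℝ, 0 < A (fun x => t * w x) ∧
      E (fun x => t * w x) = A (fun x => t * w x) ∧
      (1 / p) * E (fun x => t * w x) - (1 / q) * A (fun x => t * w x)
        = -((p - q) / (p * q)) * A w ^ (p / (p - q)) / E w ^ (q / (p - q)) := by
  set t := nehariScale p q (E w) (A w)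
  have ht : 0 < t := nehariScale_pos he ha
  have hEt : E (fun x => t * w x) = A w ^ (p / (p - q)) / E w ^ (q / (p - q)) := by
    rw [hE t ht, nehariScale_rpow_mul_left hpq he ha]
  have hAt : A (fun x => t * w x) = A w ^ (p / (p - q)) / E w ^ (q / (p - q)) := by
    rw [hA t ht, nehariScale_rpow_mul_right hpq he ha]
  have hp : 0 < p := hq.trans hpq
  refine ⟨t, hAt ▸ div_pos (Real.rpow_pos_of_pos ha _) (Real.rpow_pos_of_pos he _),
    hEt.trans hAt.symm, ?_⟩
  rw [hEt, hAt]
  field_simp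
  ring

theorem perturbation_mem (hlin : ∀ u ∈ W, ∀ v ∈ W, ∀ s t : ℝ, (fun x => s * u x + t * v x) ∈ W)
    (hφ : φ ∈ W) (hθ : θ ∈ W) (ε : ℝ) : (fun x => φ x + ε * θ x) ∈ W := by
  simpa using hlin φ hφ θ hθ 1 ε

theorem energy_perturbation_pos
    (hlin : ∀ u ∈ W, ∀ v ∈ W, ∀ s t : ℝ, (fun x => s * u x + t * v x) ∈ W)
    (hφ : φ ∈ W) (hθ : θ ∈ W) (hnonneg : ∀ u ∈ W, 0 ≤ E u)
    (hsimple : ∀ u ∈ W, E u = 0 → ∃ t : ℝ, u = fun x => t * φ x)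
    (hθφ : ∀ t : ℝ, θ ≠ fun x => t * φ x) {ε : ℝ} (hε : ε ≠ 0) :
    0 < E (fun x => φ x + ε * θ x) := by
  have hmem := perturbation_mem hlin hφ hθ ε
  refine (hnonneg _ hmem).lt_of_ne fun h => ?_
  obtain ⟨t, ht⟩ := hsimple _ hmem h.symm
  refine hθφ ((t - 1) / ε) (funext fun x => ?_)
  have hx := congrFun ht x
  field_simp
  linarith

theorem tendsto_perturbation (hq : 0 < q) (hpq : q < p)
    (hlin : ∀ u ∈ W, ∀ v ∈ W, ∀ s t : ℝ, (fun x => s * u x + t * v x) ∈ W)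
    (hφ : φ ∈ W) (hθ : θ ∈ W) (hnonneg : ∀ u ∈ W, 0 ≤ E u)
    (hsimple : ∀ u ∈ W, E u = 0 → ∃ t : ℝ, u = fun x => t * φ x)
    (hθφ : ∀ t : ℝ, θ ≠ fun x => t * φ x) (hEφ : E φ = 0) (hAφ : 0 < A φ)
    (hcontA : Continuous fun ε : ℝ => A fun x => φ x + ε * θ x)
    (hcontE : Continuous fun ε : ℝ => E fun x => φ x + ε * θ x) :
    (∀ᶠ ε in 𝓝[≠] (0 : ℝ), 0 < E fun x => φ x + ε * θ x) ∧
      Tendsto (fun ε : ℝ => A fun x => φ x + ε * θ x) (𝓝[≠] 0) (𝓝 (A φ)) ∧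
      Tendsto (fun ε : ℝ => E fun x => φ x + ε * θ x) (𝓝[≠] 0) (𝓝 0) ∧
      Tendsto (fun ε : ℝ =>
          -((p - q) / (p * q)) * (A fun x => φ x + ε * θ x) ^ (p / (p - q)) /
            (E fun x => φ x + ε * θ x) ^ (q / (p - q)))
        (𝓝[≠] 0) atBot := by
  have hEpos : ∀ᶠ ε in 𝓝[≠] (0 : ℝ), 0 < E fun x => φ x + ε * θ x :=
    eventually_nhdsWithin_of_forall fun ε hε =>
      energy_perturbation_pos hlin hφ hθ hnonneg hsimple hθφ hε
  have hAlim : Tendsto (fun ε : ℝ => A fun x => φ x + ε * θ x) (𝓝[≠] 0) (𝓝 (A φ)) :=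
    (hcontA.tendsto' 0 _ (by simp)).mono_left nhdsWithin_le_nhds
  have hElim : Tendsto (fun ε : ℝ => E fun x => φ x + ε * θ x) (𝓝[≠] 0) (𝓝 0) :=
    (hcontE.tendsto' 0 _ (by simpa using hEφ)).mono_left nhdsWithin_le_nhds
  have hc : 0 < (p - q) / (p * q) := div_pos (sub_pos.2 hpq) (mul_pos (hq.trans hpq) hq)
  exact ⟨hEpos, hAlim, hElim, tendsto_neg_mul_rpow_div_rpow_atBot hc hAφ
    (div_pos hq (sub_pos.2 hpq)) hAlim hElim hEpos⟩

end Nehari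

theorem stmt_14_general (N : ℕ) (p q lamStar : ℝ) (hq : 1 < q) (hqp : q < p)
    (Ω : Set (EuclideanSpace ℝ (Fin N)))
    (a φp : EuclideanSpace ℝ (Fin N) → ℝ)
    (W : Set (EuclideanSpace ℝ (Fin N) → ℝ))
    (Efun Afun Ifun : (EuclideanSpace ℝ (Fin N) → ℝ) → ℝ)
    (hEdef : ∀ u, Efun u
      = (∫ x in Ω, ‖fderiv ℝ u x‖ ^ p) - lamStar * ∫ x in Ω, |u x| ^ p)
    (hAdef : ∀ u, Afun u = ∫ x in Ω, a x * |u x| ^ q)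
    (hIdef : ∀ u, Ifun u = (1 / p) * Efun u - (1 / q) * Afun u)
    -- `W` is a linear space of functions:
    (hlin : ∀ u ∈ W, ∀ v ∈ W, ∀ s t : ℝ, (fun x => s * u x + t * v x) ∈ W)
    -- `φ_p` is the positive first eigenfunction and `λ* = λ₁(p)`:
    (hφW : φp ∈ W)
    (hEφ : Efun φp = 0)
    (hEnonneg : ∀ u ∈ W, 0 ≤ Efun u)
    -- simplicity of `λ₁(p)`:
    (hsimple : ∀ u ∈ W, Efun u = 0 → ∃ t : ℝ, u = fun x => t * φp x)
    -- the sign assumption `∫_Ω a φ_p^q dx > 0`: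
    (hAφ : 0 < Afun φp)
    -- `W` contains functions outside `ℝφ_p`:
    (hbig : ∃ θ ∈ W, ∀ t : ℝ, θ ≠ fun x => t * φp x)
    -- continuity of the perturbed functionals in `ε`:
    (hcontA : ∀ θ ∈ W, Continuous fun ε : ℝ => Afun fun x => φp x + ε * θ x)
    (hcontE : ∀ θ ∈ W, Continuous fun ε : ℝ => Efun fun x => φp x + ε * θ x) :
    -- behavior along the perturbations `w_ε = φ_p + ε θ`:
    (∀ θ ∈ W, (∀ t : ℝ, θ ≠ fun x => t * φp x) →
      (∀ᶠ ε in 𝓝[≠] (0 : ℝ), 0 < Efun fun x => φp x + ε * θ x) ∧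
      Tendsto (fun ε : ℝ => Afun fun x => φp x + ε * θ x) (𝓝[≠] 0) (nhds (Afun φp)) ∧
      Tendsto (fun ε : ℝ => Efun fun x => φp x + ε * θ x) (𝓝[≠] 0) (nhds 0) ∧
      Tendsto (fun ε : ℝ =>
          -((p - q) / (p * q)) * (Afun fun x => φp x + ε * θ x) ^ (p / (p - q)) /
            (Efun fun x => φp x + ε * θ x) ^ (q / (p - q)))
        (𝓝[≠] 0) atBot) ∧
    -- `M(λ*) = −∞`:
    (∀ R : ℝ, ∃ u ∈ W, u ≠ 0 ∧ Efun u = Afun u ∧ Ifun u < R) := by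
  have hq0 : 0 < q := one_pos.trans hq
  have hE : Efun = pEnergy (volume.restrict Ω) lamStar p := funext hEdef
  have hA : Afun = weightedLpIntegral (volume.restrict Ω) a q := funext hAdef
  have hE_hom (u) (t : ℝ) (ht : 0 < t) : Efun (fun x => t * u x) = t ^ p * Efun u := by
    rw [hE, pEnergy_const_mul, abs_of_pos ht]
  have hA_hom (u) (t : ℝ) (ht : 0 < t) : Afun (fun x => t * u x) = t ^ q * Afun u := by
    rw [hA, weightedLpIntegral_const_mul, abs_of_pos ht]
  have perturb := fun θ hθW hθ =>
    tendsto_perturbation hq0 hqp hlin hφW hθW hEnonneg hsimple hθ hEφ hAφ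
      (hcontA θ hθW) (hcontE θ hθW)
  refine ⟨perturb, fun R => ?_⟩
  obtain ⟨θ, hθW, hθ⟩ := hbig
  obtain ⟨hEpos, hAlim, -, hJ⟩ := perturb θ hθW hθ
  obtain ⟨ε, hEε, hAε, hJε⟩ := (hEpos.and ((hAlim.eventually (eventually_gt_nhds hAφ)).and
    (hJ.eventually (eventually_lt_atBot R)))).exists
  obtain ⟨t, hAt, hEAt, hIt⟩ :=
    exists_nehari_rescaling hq0 hqp (hE_hom _) (hA_hom _) hEε hAε
  refine ⟨_, ?_, fun h => ?_, hEAt, (hIdef _).trans_lt (hIt ▸ hJε)⟩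
  · simpa only [zero_mul, add_zero] using
      hlin _ (perturbation_mem hlin hφW hθW ε) φp hφW t 0
  · rw [h, hAdef] at hAt
    simp [Real.zero_rpow hq0.ne'] at hAt

/-- If `∫_Ω a φ_p^q dx > 0`, then `M(λ*) = −∞`: the infimum of `I_{λ*}` over the
Nehari manifold `N_{λ*}` is `−∞`. More precisely, for `w_ε = φ_p + ε θ` with
`θ ∈ W₀^{1,p} \ ℝφ_p`, one has `E_{λ*}(w_ε) > 0` for small `ε ≠ 0`,
`∫_Ω a|w_ε|^q → ∫_Ω a φ_p^q > 0` and `E_{λ*}(w_ε) → 0` as `ε → 0`, and consequently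
`J_{λ*}(w_ε) = −((p−q)/(pq)) (∫_Ω a|w_ε|^q)^{p/(p−q)} / E_{λ*}(w_ε)^{q/(p−q)} → −∞`.
Here `W₀^{1,p}(Ω)` is modelled by an abstract linear set of functions `W` containing
the first eigenfunction `φ_p` (with simple eigenvalue `λ* = λ₁(p)`, encoded by
`E_{λ*} ≥ 0` on `W`, vanishing only on `ℝφ_p`). -/
theorem stmt_14 (N : ℕ) (p q lamStar : ℝ) (hq : 1 < q) (hqp : q < p)
    (Ω : Set (EuclideanSpace ℝ (Fin N)))
    (a φp : EuclideanSpace ℝ (Fin N) → ℝ)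
    (W : Set (EuclideanSpace ℝ (Fin N) → ℝ))
    (Efun Afun Ifun : (EuclideanSpace ℝ (Fin N) → ℝ) → ℝ)
    (hEdef : ∀ u, Efun u
      = (∫ x in Ω, ‖fderiv ℝ u x‖ ^ p) - lamStar * ∫ x in Ω, |u x| ^ p)
    (hAdef : ∀ u, Afun u = ∫ x in Ω, a x * |u x| ^ q)
    (hIdef : ∀ u, Ifun u = (1 / p) * Efun u - (1 / q) * Afun u)
    -- `W` is a linear space of functions:
    (hlin : ∀ u ∈ W, ∀ v ∈ W, ∀ s t : ℝ, (fun x => s * u x + t * v x) ∈ W)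
    -- `φ_p` is the positive first eigenfunction and `λ* = λ₁(p)`:
    (hφW : φp ∈ W) (hφpos : ∀ x ∈ Ω, 0 < φp x)
    (hEφ : Efun φp = 0)
    (hEnonneg : ∀ u ∈ W, 0 ≤ Efun u)
    -- simplicity of `λ₁(p)`:
    (hsimple : ∀ u ∈ W, Efun u = 0 → ∃ t : ℝ, u = fun x => t * φp x)
    -- the sign assumption `∫_Ω a φ_p^q dx > 0`:
    (hAφ : 0 < Afun φp)
    -- `W` contains functions outside `ℝφ_p`:
    (hbig : ∃ θ ∈ W, ∀ t : ℝ, θ ≠ fun x => t * φp x)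
    -- continuity of the perturbed functionals in `ε`:
    (hcontA : ∀ θ ∈ W, Continuous fun ε : ℝ => Afun fun x => φp x + ε * θ x)
    (hcontE : ∀ θ ∈ W, Continuous fun ε : ℝ => Efun fun x => φp x + ε * θ x) :
    -- behavior along the perturbations `w_ε = φ_p + ε θ`:
    (∀ θ ∈ W, (∀ t : ℝ, θ ≠ fun x => t * φp x) →
      (∀ᶠ ε in 𝓝[≠] (0 : ℝ), 0 < Efun fun x => φp x + ε * θ x) ∧
      Tendsto (fun ε : ℝ => Afun fun x => φp x + ε * θ x) (𝓝[≠] 0) (nhds (Afun φp)) ∧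
      Tendsto (fun ε : ℝ => Efun fun x => φp x + ε * θ x) (𝓝[≠] 0) (nhds 0) ∧
      Tendsto (fun ε : ℝ =>
          -((p - q) / (p * q)) * (Afun fun x => φp x + ε * θ x) ^ (p / (p - q)) /
            (Efun fun x => φp x + ε * θ x) ^ (q / (p - q)))
        (𝓝[≠] 0) atBot) ∧
    -- `M(λ*) = −∞`:
    (∀ R : ℝ, ∃ u ∈ W, u ≠ 0 ∧ Efun u = Afun u ∧ Ifun u < R) :=
  stmt_14_general N p q lamStar hq hqp Ω a φp W Efun Afun Ifun hEdef hAdef hIdef hlin hφW hEφ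
    hEnonneg hsimple hAφ hbig hcontA hcontE
end

section
/- Let 1 < q < p and λ ∈ ℝ. If E_λ(u) > 0 and ∫_Ω a|u|^q dx > 0 for some u ∈ W₀^{1,p}(Ω), then t_λ(u)·u ∈ N_λ ∩ A⁺, where t_λ(u) = (∫_Ω a|u|^q dx / E_λ(u))^{1/(p−q)}; moreover I_λ(t_λ(u)u) = min_{t>0} I_λ(tu) ≤ I_λ(u), with I_λ(t_λ(u)u) < 0. -/
/-!
Scaling `u ↦ t • u` multiplies `E_λ` by `t ^ p` and the weight integral `A(u) = ∫_Ω a|u|^q` by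
`t ^ q`, so `I_λ(t • u)` is the real function `t ↦ t ^ p E / p - t ^ q A / q` of `t > 0`, with
`E = E_λ(u) > 0` and `A = A(u) > 0`. Its critical point `t₀ = (A / E) ^ (1 / (p - q))` is where
`t₀ ^ p E = t₀ ^ q A` (the Nehari identity), and writing `t = s t₀` the minimality of `t₀` is the
weighted AM–GM inequality `s ^ q ≤ (q / p) s ^ p + (1 - q / p)`. At `t₀` the value is
`(1 / p - 1 / q) t₀ ^ q A < 0`.
-/

open MeasureTheory

theorem one_div_sub_one_div_le_rpow_div_sub_rpow_div {p q s : ℝ} (hq : 0 < q) (hqp : q < p)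
    (hs : 0 ≤ s) : 1 / p - 1 / q ≤ s ^ p / p - s ^ q / q := by
  have hp : 0 < p := hq.trans hqp
  have amgm := Real.geom_mean_le_arith_mean2_weighted (p₁ := s ^ p) (p₂ := 1)
    (div_nonneg hq.le hp.le) (sub_nonneg.2 ((div_le_one hp).2 hqp.le))
    (Real.rpow_nonneg hs p) zero_le_one (add_sub_cancel _ _)
  rw [Real.one_rpow, mul_one, ← Real.rpow_mul hs, mul_div_cancel₀ q hp.ne', mul_one] at amgm
  have hdiv : s ^ q / q ≤ s ^ p / p + (1 / q - 1 / p) := by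
    rw [div_le_iff₀ hq]
    calc s ^ q ≤ q / p * s ^ p + (1 - q / p) := amgm
      _ = (s ^ p / p + (1 / q - 1 / p)) * q := by field_simp
  linarith

section Fiber

variable {p q E A : ℝ}

/-- The fiber map `t ↦ I_λ(t • u)` in terms of `E = E_λ(u)` and `A = ∫_Ω a|u|^q`. -/
noncomputable def fiberMap (p q E A t : ℝ) : ℝ := 1 / p * (t ^ p * E) - 1 / q * (t ^ q * A)

noncomputable def fiberMinimizer (p q E A : ℝ) : ℝ := (A / E) ^ (1 / (p - q))

theorem fiberMinimizer_pos (hE : 0 < E) (hA : 0 < A) : 0 < fiberMinimizer p q E A :=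
  Real.rpow_pos_of_pos (div_pos hA hE) _

theorem fiberMinimizer_rpow_mul (hE : 0 < E) (hA : 0 < A) (hqp : q < p) :
    fiberMinimizer p q E A ^ p * E = fiberMinimizer p q E A ^ q * A := by
  have hsub : fiberMinimizer p q E A ^ (p - q) = A / E := by
    rw [fiberMinimizer, ← Real.rpow_mul (div_pos hA hE).le,
      one_div_mul_cancel (sub_pos.2 hqp).ne', Real.rpow_one]
  set t₀ := fiberMinimizer p q E A
  have ht₀ : 0 < t₀ := fiberMinimizer_pos hE hA
  have hsplit : t₀ ^ p = t₀ ^ (p - q) * t₀ ^ q := by rw [← Real.rpow_add ht₀, sub_add_cancel]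
  rw [hsplit, hsub]
  field_simp

theorem fiberMap_fiberMinimizer_le (hE : 0 < E) (hA : 0 < A) (hq : 0 < q) (hqp : q < p)
    {t : ℝ} (ht : 0 ≤ t) : fiberMap p q E A (fiberMinimizer p q E A) ≤ fiberMap p q E A t := by
  set t₀ := fiberMinimizer p q E A
  have ht₀ : 0 < t₀ := fiberMinimizer_pos hE hA
  set K := t₀ ^ p * E
  have hK : 0 ≤ K := by positivity
  have hscale : ∀ r : ℝ, t ^ r = (t / t₀) ^ r * t₀ ^ r := fun r => by
    rw [Real.div_rpow ht ht₀.le, div_mul_cancel₀ _ (Real.rpow_pos_of_pos ht₀ r).ne']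
  have hmin := mul_le_mul_of_nonneg_left
    (one_div_sub_one_div_le_rpow_div_sub_rpow_div hq hqp (div_nonneg ht ht₀.le)) hK
  calc fiberMap p q E A t₀ = K * (1 / p - 1 / q) := by
        rw [fiberMap, ← fiberMinimizer_rpow_mul hE hA hqp]; ring
    _ ≤ K * ((t / t₀) ^ p / p - (t / t₀) ^ q / q) := hmin
    _ = fiberMap p q E A t := by
        rw [fiberMap, hscale p, hscale q, mul_assoc _ (t₀ ^ q) A,
          ← fiberMinimizer_rpow_mul hE hA hqp]
        ring

theorem fiberMap_fiberMinimizer_neg (hE : 0 < E) (hA : 0 < A) (hq : 0 < q) (hqp : q < p) :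
    fiberMap p q E A (fiberMinimizer p q E A) < 0 := by
  have hpos : 0 < fiberMinimizer p q E A ^ q * A :=
    mul_pos (Real.rpow_pos_of_pos (fiberMinimizer_pos hE hA) q) hA
  rw [fiberMap, fiberMinimizer_rpow_mul hE hA hqp, ← sub_mul]
  exact mul_neg_of_neg_of_pos (sub_neg.2 (one_div_lt_one_div_of_lt hq hqp)) hpos

end Fiber

section Scaling

variable {X : Type*} [MeasurableSpace X] {μ : Measure X} {u : X → ℝ} {t : ℝ}

theorem integral_mul_abs_const_mul_rpow (ht : 0 ≤ t) (w : X → ℝ) (p : ℝ) :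
    ∫ x, w x * |t * u x| ^ p ∂μ = t ^ p * ∫ x, w x * |u x| ^ p ∂μ := by
  simp_rw [abs_mul, abs_of_nonneg ht, Real.mul_rpow ht (abs_nonneg _), mul_left_comm (w _)]
  exact integral_const_mul _ _

theorem integral_abs_const_mul_rpow (ht : 0 ≤ t) (p : ℝ) :
    ∫ x, |t * u x| ^ p ∂μ = t ^ p * ∫ x, |u x| ^ p ∂μ := by
  simpa only [one_mul] using integral_mul_abs_const_mul_rpow (μ := μ) (u := u) ht (fun _ => 1) p

theorem integral_norm_fderiv_const_mul_rpow [NormedAddCommGroup X] [NormedSpace ℝ X]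
    (ht : 0 ≤ t) (p : ℝ) :
    ∫ x, ‖fderiv ℝ (fun y => t * u y) x‖ ^ p ∂μ = t ^ p * ∫ x, ‖fderiv ℝ u x‖ ^ p ∂μ := by
  have hderiv : ∀ x, fderiv ℝ (fun y => t * u y) x = t • fderiv ℝ u x := fun x =>
    congrFun (fderiv_const_smul_field t) x
  simp_rw [hderiv, norm_smul, Real.norm_of_nonneg ht, Real.mul_rpow ht (norm_nonneg _)]
  exact integral_const_mul _ _

end Scaling

/-- If `E_λ(u) > 0` and `∫_Ω a|u|^q > 0`, then with
`t₀ = t_λ(u) = (∫_Ω a|u|^q / E_λ(u))^{1/(p−q)}`, the function `t₀·u` belongs to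
`N_λ ∩ A⁺` (it is nonzero, satisfies the Nehari identity, and has positive weight
integral); moreover `I_λ(t₀ u) = min_{t>0} I_λ(tu) ≤ I_λ(u)` and `I_λ(t₀ u) < 0`. -/
theorem stmt_19 (N : ℕ) (p q lam : ℝ) (hq : 1 < q) (hqp : q < p)
    (Ω : Set (EuclideanSpace ℝ (Fin N)))
    (a u : EuclideanSpace ℝ (Fin N) → ℝ) :
    let Efun : (EuclideanSpace ℝ (Fin N) → ℝ) → ℝ := fun w =>
      (∫ x in Ω, ‖fderiv ℝ w x‖ ^ p) - lam * ∫ x in Ω, |w x| ^ p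
    let Afun : (EuclideanSpace ℝ (Fin N) → ℝ) → ℝ := fun w =>
      ∫ x in Ω, a x * |w x| ^ q
    let Ifun : (EuclideanSpace ℝ (Fin N) → ℝ) → ℝ := fun w =>
      (1 / p) * Efun w - (1 / q) * Afun w
    0 < Efun u → 0 < Afun u →
    let t₀ : ℝ := (Afun u / Efun u) ^ (1 / (p - q))
    let tu : ℝ → EuclideanSpace ℝ (Fin N) → ℝ := fun t x => t * u x
    tu t₀ ≠ 0 ∧
    Efun (tu t₀) = Afun (tu t₀) ∧
    0 < Afun (tu t₀) ∧
    (∀ t : ℝ, 0 < t → Ifun (tu t₀) ≤ Ifun (tu t)) ∧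
    Ifun (tu t₀) ≤ Ifun u ∧
    Ifun (tu t₀) < 0 := by
  intro Efun Afun Ifun hE hA t₀ tu
  have hq₀ : 0 < q := zero_lt_one.trans hq
  have hEs : ∀ t, 0 ≤ t → Efun (tu t) = t ^ p * Efun u := fun t ht => by
    simp only [Efun, tu, integral_norm_fderiv_const_mul_rpow ht, integral_abs_const_mul_rpow ht]
    ring
  have hAs : ∀ t, 0 ≤ t → Afun (tu t) = t ^ q * Afun u := fun t ht =>
    integral_mul_abs_const_mul_rpow ht a q
  have hIs : ∀ t, 0 ≤ t → Ifun (tu t) = fiberMap p q (Efun u) (Afun u) t := fun t ht => by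
    simp only [Ifun, fiberMap, hEs t ht, hAs t ht]
  have ht₀ : 0 < t₀ := fiberMinimizer_pos hE hA
  have hmin : ∀ t, 0 ≤ t → Ifun (tu t₀) ≤ Ifun (tu t) := fun t ht => by
    rw [hIs t₀ ht₀.le, hIs t ht]
    exact fiberMap_fiberMinimizer_le hE hA hq₀ hqp ht
  have hApos : 0 < Afun (tu t₀) := by
    rw [hAs t₀ ht₀.le]
    exact mul_pos (Real.rpow_pos_of_pos ht₀ q) hA
  refine ⟨fun hzero => ?_, ?_, hApos, fun t ht => hmin t ht.le, ?_, ?_⟩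
  · simp [Afun, hzero, Real.zero_rpow hq₀.ne'] at hApos
  · rw [hEs t₀ ht₀.le, hAs t₀ ht₀.le]
    exact fiberMinimizer_rpow_mul hE hA hqp
  · simpa [tu] using hmin 1 zero_le_one
  · rw [hIs t₀ ht₀.le]
    exact fiberMap_fiberMinimizer_neg hE hA hq₀ hqp
end
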